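/- arXiv:1907.05232 — 4 statements merged into one kernel-verified Lean document; each statement's English description precedes it below -/
import Mathlib

section
/- With $\mathfrak{g}$, $\mathfrak{t}$, $F$ as above (self-adjoint, image in $\mathfrak{t}$, vanishing on $\mathfrak{t}^\perp$), for all $y \in \mathfrak{g}$ and $s \in \mathbb{R}$ one has $F \circ e^{s\,\mathrm{ad}_{Fy}} = F$, where $e^{s\,\mathrm{ad}_{Fy}}$ denotes the operator exponential of $s\,\mathrm{ad}_{Fy}$. -/
open scoped RealInnerProductSpace Nat

open NormedSpace in
theorem mul_exp_eq_self_of_mul_eq_zero {𝕂 𝔸 : Type*} [NontriviallyNormedField 𝕂] [CharZero 𝕂]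
    [ContinuousSMul ℚ 𝕂] [NormedRing 𝔸] [NormedAlgebra 𝕂 𝔸] [CompleteSpace 𝔸] {a b : 𝔸}
    (h : a * b = 0) : a * exp b = a := by
  have hterm : ∀ n ≠ 0, a * ((n !⁻¹ : 𝕂) • b ^ n) = 0 := by
    intro n hn
    rw [mul_smul_comm, ← Nat.succ_pred_eq_of_ne_zero hn, pow_succ', ← mul_assoc, h, zero_mul,
      smul_zero]
  simpa using ((exp_series_hasSum_exp' (𝕂 := 𝕂) b).mul_left a).unique (hasSum_single 0 hterm)

/-- Invariance of the form moves the bracket with `A` to the other side, where it kills `𝔱`. -/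
theorem bracket_mem_orthogonal_of_forall_bracket_eq_zero {g : Type*} [NormedAddCommGroup g]
    [InnerProductSpace ℝ g] (l : g →ₗ[ℝ] g →ₗ[ℝ] g)
    (hinv : ∀ X Y Z : g, ⟪l X Y, Z⟫ + ⟪Y, l X Z⟫ = 0) {t : Submodule ℝ g} {A : g}
    (hA : ∀ B ∈ t, l A B = 0) (w : g) : l A w ∈ tᗮ := by
  intro B hB
  simpa [hA B hB, real_inner_comm] using hinv A w B

theorem F_comp_exp_ad_Fy_eq_F_general
    {g : Type*} [NormedAddCommGroup g] [InnerProductSpace ℝ g] [FiniteDimensional ℝ g]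
    (l : g →ₗ[ℝ] g →ₗ[ℝ] g)
    (hinv : ∀ X Y Z : g, ⟪l X Y, Z⟫ + ⟪Y, l X Z⟫ = 0)
    (t : Submodule ℝ g)
    (habelian : ∀ A ∈ t, ∀ B ∈ t, l A B = 0)
    (F : g →ₗ[ℝ] g)
    (hFim : ∀ v : g, F v ∈ t)
    (hFperp : ∀ v ∈ tᗮ, F v = 0)
    (y : g) (s : ℝ) :
    ∀ V : g,
      F (NormedSpace.exp (s • LinearMap.toContinuousLinearMap (l (F y))) V) = F V := by
  have hF_ad : LinearMap.toContinuousLinearMap F * (s • LinearMap.toContinuousLinearMap (l (F y)))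
      = 0 := by
    ext w
    simp [hFperp _ (bracket_mem_orthogonal_of_forall_bracket_eq_zero l hinv
      (habelian _ (hFim y)) w)]
  intro V
  exact congr($(mul_exp_eq_self_of_mul_eq_zero (𝕂 := ℝ) hF_ad) V)

/-- With `𝔤`, `𝔱`, `F` as before, for all `y ∈ 𝔤` and `s ∈ ℝ` one has
`F ∘ e^{s ad_{Fy}} = F`, where the exponential is the operator exponential of the
continuous endomorphism `s • ad_{Fy}`. -/
theorem F_comp_exp_ad_Fy_eq_F
    {g : Type*} [NormedAddCommGroup g] [InnerProductSpace ℝ g] [FiniteDimensional ℝ g]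
    (l : g →ₗ[ℝ] g →ₗ[ℝ] g)
    (hlalt : ∀ X : g, l X X = 0)
    (hljac : ∀ X Y Z : g, l X (l Y Z) = l (l X Y) Z + l Y (l X Z))
    (hinv : ∀ X Y Z : g, ⟪l X Y, Z⟫ + ⟪Y, l X Z⟫ = 0)
    (t : Submodule ℝ g)
    (htsub : ∀ A ∈ t, ∀ B ∈ t, l A B ∈ t)
    (habelian : ∀ A ∈ t, ∀ B ∈ t, l A B = 0)
    (F : g →ₗ[ℝ] g)
    (hFsa : ∀ v w : g, ⟪F v, w⟫ = ⟪v, F w⟫)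
    (hFim : ∀ v : g, F v ∈ t)
    (hFperp : ∀ v ∈ tᗮ, F v = 0)
    (y : g) (s : ℝ) :
    ∀ V : g,
      F (NormedSpace.exp (s • LinearMap.toContinuousLinearMap (l (F y))) V) = F V :=
  F_comp_exp_ad_Fy_eq_F_general l hinv t habelian F hFim hFperp y s
end

section
/- With $\mathfrak{g}$, $\mathfrak{t}$, $F$ as above, if $V \in \mathfrak{g}$ satisfies $e^{s\,\mathrm{ad}_{Fy}}V = s\,[y, FV]$ for some $y \in \mathfrak{g}$ and $s \in \mathbb{R}$, then $V = 0$. -/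
/-!
Since `𝔱` is abelian and the inner product is invariant, `ad_{Fy}` maps `𝔤` into `𝔱ᗮ`, hence
`e^{s ad_{Fy}} V - V ∈ 𝔱ᗮ`. Pairing the equation with `F (F V) ∈ 𝔱` gives
`‖F V‖² = ⟪V, F (F V)⟫ = s ⟪[y, F V], F (F V)⟫ = s ⟪y, [F V, F (F V)]⟫ = 0`.
So `F V = 0`, the right-hand side vanishes, and `V = 0` because the exponential is invertible.
-/

open scoped RealInnerProductSpace

theorem NormedSpace.exp_apply_sub_self_mem {E : Type*} [NormedAddCommGroup E] [NormedSpace ℝ E]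
    [CompleteSpace E] {K : Submodule ℝ E} (hK : IsClosed (K : Set E)) {M : E →L[ℝ] E}
    (hM : ∀ w, M w ∈ K) (v : E) : exp M v - v ∈ K := by
  have hsum := (exp_series_hasSum_exp' (𝕂 := ℝ) M).mapL (ContinuousLinearMap.apply ℝ E v)
  rw [← hasSum_nat_add_iff' 1] at hsum
  simp only [ContinuousLinearMap.apply_apply, map_smul, Finset.range_one, Finset.sum_singleton,
    Nat.factorial_zero, Nat.cast_one, inv_one, one_smul, pow_zero, one_apply_eq_self] at hsum
  rw [← hsum.tsum_eq]
  refine tsum_mem hK fun n => K.smul_mem _ ?_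
  rw [pow_succ', mul_apply_eq_comp]
  exact hM _

section SkewAdjoint

variable {E : Type*} [NormedAddCommGroup E] [InnerProductSpace ℝ E]

theorem Submodule.apply_mem_orthogonal_of_skew {A : E →ₗ[ℝ] E}
    (hA : ∀ v w, ⟪A v, w⟫ + ⟪v, A w⟫ = 0) {K : Submodule ℝ E} (hK : ∀ u ∈ K, A u = 0)
    (v : E) : A v ∈ Kᗮ := by
  rw [Submodule.mem_orthogonal']
  intro u hu
  have := hA v u
  rwa [hK u hu, inner_zero_right, add_zero] at this

theorem inner_bracket_eq_zero_of_bracket_eq_zero {l : E →ₗ[ℝ] E →ₗ[ℝ] E} (hlalt : l.IsAlt)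
    (hinv : ∀ X Y Z : E, ⟪l X Y, Z⟫ + ⟪Y, l X Z⟫ = 0) {a b : E} (hab : l a b = 0) (y : E) :
    ⟪l y a, b⟫ = 0 := by
  have := hinv a y b
  rw [hab, inner_zero_right, add_zero] at this
  rw [← hlalt.neg, inner_neg_left, this, neg_zero]

end SkewAdjoint

theorem eq_zero_of_exp_eq_s_bracket_general
    {g : Type*} [NormedAddCommGroup g] [InnerProductSpace ℝ g] [FiniteDimensional ℝ g]
    (l : g →ₗ[ℝ] g →ₗ[ℝ] g)
    (hlalt : ∀ X : g, l X X = 0)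
    (hinv : ∀ X Y Z : g, ⟪l X Y, Z⟫ + ⟪Y, l X Z⟫ = 0)
    (t : Submodule ℝ g)
    (habelian : ∀ A ∈ t, ∀ B ∈ t, l A B = 0)
    (F : g →ₗ[ℝ] g)
    (hFsa : ∀ v w : g, ⟪F v, w⟫ = ⟪v, F w⟫)
    (hFim : ∀ v : g, F v ∈ t)
    (y : g) (s : ℝ) (V : g)
    (hV : NormedSpace.exp (s • LinearMap.toContinuousLinearMap (l (F y))) V
        = s • l y (F V)) :
    V = 0 := by
  set M : g →L[ℝ] g := s • LinearMap.toContinuousLinearMap (l (F y))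
  have hM : ∀ w, M w ∈ tᗮ := fun w => tᗮ.smul_mem s <|
    t.apply_mem_orthogonal_of_skew (hinv (F y)) (fun u hu => habelian _ (hFim y) u hu) w
  have hexp : NormedSpace.exp M V - V ∈ tᗮ :=
    NormedSpace.exp_apply_sub_self_mem t.isClosed_orthogonal hM V
  have hFV : F V = 0 := by
    rw [← inner_self_eq_zero (𝕜 := ℝ)]
    calc ⟪F V, F V⟫ = ⟪NormedSpace.exp M V, F (F V)⟫ - ⟪NormedSpace.exp M V - V, F (F V)⟫ := by
          rw [inner_sub_left, sub_sub_cancel, hFsa]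
      _ = 0 := by
          rw [(Submodule.mem_orthogonal' _ _).1 hexp _ (hFim _), hV, real_inner_smul_left,
            inner_bracket_eq_zero_of_bracket_eq_zero hlalt hinv
              (habelian _ (hFim V) _ (hFim (F V))), mul_zero, sub_zero]
  rw [hFV, map_zero, smul_zero] at hV
  have hunit : IsUnit (NormedSpace.exp M) := NormedSpace.isUnit_exp_of_mem_ball (𝕂 := ℝ) <|
    (NormedSpace.expSeries_radius_eq_top ℝ (g →L[ℝ] g)).symm ▸ edist_lt_top _ _
  exact (ContinuousLinearMap.isUnit_iff_bijective.1 hunit).injective (hV.trans (map_zero _).symm)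

/-- With `𝔤`, `𝔱`, `F` as before, if `V` satisfies
`e^{s ad_{Fy}} V = s • [y, F V]` for some `y` and `s`, then `V = 0`. -/
theorem eq_zero_of_exp_eq_s_bracket
    {g : Type*} [NormedAddCommGroup g] [InnerProductSpace ℝ g] [FiniteDimensional ℝ g]
    (l : g →ₗ[ℝ] g →ₗ[ℝ] g)
    (hlalt : ∀ X : g, l X X = 0)
    (hljac : ∀ X Y Z : g, l X (l Y Z) = l (l X Y) Z + l Y (l X Z))
    (hinv : ∀ X Y Z : g, ⟪l X Y, Z⟫ + ⟪Y, l X Z⟫ = 0)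
    (t : Submodule ℝ g)
    (htsub : ∀ A ∈ t, ∀ B ∈ t, l A B ∈ t)
    (habelian : ∀ A ∈ t, ∀ B ∈ t, l A B = 0)
    (F : g →ₗ[ℝ] g)
    (hFsa : ∀ v w : g, ⟪F v, w⟫ = ⟪v, F w⟫)
    (hFim : ∀ v : g, F v ∈ t)
    (hFperp : ∀ v ∈ tᗮ, F v = 0)
    (y : g) (s : ℝ) (V : g)
    (hV : NormedSpace.exp (s • LinearMap.toContinuousLinearMap (l (F y))) V
        = s • l y (F V)) :
    V = 0 :=
  eq_zero_of_exp_eq_s_bracket_general l hlalt hinv t habelian F hFsa hFim y s V hV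
end

section
/- Let $h : \mathfrak{g} \to \mathbb{R}$ be a smooth $\mathrm{Ad}$-invariant function on the Lie algebra of a compact Lie group $G$ with $\mathrm{Ad}$-invariant inner product, with gradient $u_h$ and Hessian $H_h(y)$ (a self-adjoint endomorphism of $\mathfrak{g}$). Then $\mathrm{ad}_{u_h(y)} = \mathrm{ad}_y \circ H_h(y) = H_h(y) \circ \mathrm{ad}_y$ for every $y \in \mathfrak{g}$. -/
open scoped RealInnerProductSpace

/-!
Differentiating the invariance `⟪u z, [A, z]⟫ = dh_z [A, z] = 0` at `y` in direction `V` gives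
`⟪H V, [A, y]⟫ + ⟪u y, [A, V]⟫ = 0` for all `A`, where `H = du_y`. Moving the brackets across the
inner product with skew-adjointness of `ad` turns this into `[u y, V] = [y, H V]`. Since `H` is the
Hessian of `h`, it is symmetric, and skew-adjointness of `ad_{u y}` and `ad_y` then transports the
first identity to `[u y, V] = H [y, V]`.
-/

section

variable {g : Type*} [NormedAddCommGroup g] [InnerProductSpace ℝ g]

theorem inner_fderiv_apply_add_inner_apply_eq_zero {u : g → g} {y : g}
    (huy : DifferentiableAt ℝ u y) (L : g →L[ℝ] g) (horth : ∀ z, ⟪u z, L z⟫ = 0) (V : g) :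
    ⟪fderiv ℝ u y V, L y⟫ + ⟪u y, L V⟫ = 0 := by
  have hconst : (fun z => ⟪u z, L z⟫) = fun _ => 0 := funext horth
  have := fderiv_inner_apply ℝ huy L.differentiableAt V
  rw [hconst, fderiv_fun_const, Pi.zero_apply, zero_apply, L.fderiv] at this
  linarith

theorem isSymmetric_fderiv_of_inner_eq_fderiv {h : g → ℝ} {u : g → g} {y : g}
    (hh : Differentiable ℝ h) (hu : ∀ z A, ⟪u z, A⟫ = fderiv ℝ h z A)
    (huy : DifferentiableAt ℝ u y) : (fderiv ℝ u y : g →ₗ[ℝ] g).IsSymmetric := by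
  have hgrad : ∀ z, HasFDerivAt h (innerSL ℝ (u z)) z := fun z => by
    convert (hh z).hasFDerivAt using 1
    ext A
    exact hu z A
  intro V W
  have := second_derivative_symmetric hgrad ((innerSL ℝ).hasFDerivAt.comp y huy.hasFDerivAt) V W
  rw [ContinuousLinearMap.comp_apply, ContinuousLinearMap.comp_apply, innerSL_apply_apply,
    innerSL_apply_apply] at this
  exact this.trans (real_inner_comm _ _)

variable {l : g →ₗ[ℝ] g →ₗ[ℝ] g}

theorem bracket_eq_bracket_apply_of_inner_add_inner_eq_zero (hlalt : l.IsAlt)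
    (hinv : ∀ X Y Z : g, ⟪l X Y, Z⟫ + ⟪Y, l X Z⟫ = 0) {x y : g} {H : g → g}
    (hkey : ∀ A V, ⟪H V, l A y⟫ + ⟪x, l A V⟫ = 0) (V : g) : l x V = l y (H V) := by
  refine ext_inner_right ℝ fun A => ?_
  have h1 := hinv y (H V) A
  have h2 := hinv V x A
  have h3 := hkey A V
  rw [← hlalt.neg y A, ← hlalt.neg V A, inner_neg_right, inner_neg_right] at h3
  rw [← hlalt.neg x V, inner_neg_left] at h2
  linarith

theorem bracket_eq_apply_bracket_of_isSymmetric
    (hinv : ∀ X Y Z : g, ⟪l X Y, Z⟫ + ⟪Y, l X Z⟫ = 0) {x y : g} {H : g →ₗ[ℝ] g}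
    (hH : H.IsSymmetric) (hxy : ∀ V, l x V = l y (H V)) (V : g) : l x V = H (l y V) := by
  refine ext_inner_right ℝ fun W => ?_
  have h1 := hinv x V W
  have h2 := hinv y V (H W)
  rw [hxy W] at h1
  rw [hH]
  linarith

end

theorem ad_grad_eq_ad_comp_hessian_general
    {g : Type*} [NormedAddCommGroup g] [InnerProductSpace ℝ g] [FiniteDimensional ℝ g]
    (l : g →ₗ[ℝ] g →ₗ[ℝ] g)
    (hlalt : ∀ X : g, l X X = 0)
    (hinv : ∀ X Y Z : g, ⟪l X Y, Z⟫ + ⟪Y, l X Z⟫ = 0)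
    (h : g → ℝ) (hh : ContDiff ℝ 2 h)
    (hadh : ∀ (y A : g), fderiv ℝ h y (l A y) = 0)
    (u : g → g) (hudiff : Differentiable ℝ u)
    (hu : ∀ (y A : g), ⟪u y, A⟫ = fderiv ℝ h y A)
    (y : g) :
    ∀ V : g,
      l (u y) V = l y (fderiv ℝ u y V) ∧ l (u y) V = fderiv ℝ u y (l y V) := by
  have hkey (A V : g) : ⟪fderiv ℝ u y V, l A y⟫ + ⟪u y, l A V⟫ = 0 :=
    inner_fderiv_apply_add_inner_apply_eq_zero (hudiff y) (l A).toContinuousLinearMap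
      (fun z => (hu z _).trans (hadh z A)) V
  have hfirst := bracket_eq_bracket_apply_of_inner_add_inner_eq_zero hlalt hinv hkey
  have hsymm :=
    isSymmetric_fderiv_of_inner_eq_fderiv (hh.differentiable (by norm_num)) hu (hudiff y)
  exact fun V => ⟨hfirst V, bracket_eq_apply_bracket_of_isSymmetric hinv hsymm hfirst V⟩

/-- For a smooth `Ad`-invariant function `h` on `𝔤` (bracket `l`) with gradient
`u` and Hessian `H_h(y) = d(u)_y`, one has `ad_{u(y)} = ad_y ∘ H_h(y) = H_h(y) ∘ ad_y`.
`Ad`-invariance is encoded infinitesimally via `dh_y([A,y]) = 0`. -/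
theorem ad_grad_eq_ad_comp_hessian
    {g : Type*} [NormedAddCommGroup g] [InnerProductSpace ℝ g] [FiniteDimensional ℝ g]
    (l : g →ₗ[ℝ] g →ₗ[ℝ] g)
    (hlalt : ∀ X : g, l X X = 0)
    (hljac : ∀ X Y Z : g, l X (l Y Z) = l (l X Y) Z + l Y (l X Z))
    (hinv : ∀ X Y Z : g, ⟪l X Y, Z⟫ + ⟪Y, l X Z⟫ = 0)
    (h : g → ℝ) (hh : ContDiff ℝ 2 h)
    (hadh : ∀ (y A : g), fderiv ℝ h y (l A y) = 0)
    (u : g → g) (hudiff : Differentiable ℝ u)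
    (hu : ∀ (y A : g), ⟪u y, A⟫ = fderiv ℝ h y A)
    (y : g) :
    ∀ V : g,
      l (u y) V = l y (fderiv ℝ u y V) ∧ l (u y) V = fderiv ℝ u y (l y V) :=
  ad_grad_eq_ad_comp_hessian_general l hlalt hinv h hh hadh u hudiff hu y
end

section
/- Let $G$ be a Lie group with Lie algebra $\mathfrak{g}$, $\mathfrak{t}$ an abelian subalgebra with corresponding torus data, $h$ a smooth $\mathrm{Ad}$-invariant function with gradient $u_h$, and $F$ self-adjoint with image in $\mathfrak{t}$, vanishing on $\mathfrak{t}^\perp$. Then for every $y \in \mathfrak{g}$ and $s,t \in \mathbb{R}$, one has the identity in $G$: $e^{sFy}\, e^{t\,u_h(e^{-s\,\mathrm{ad}_{Fy}} y)} = e^{t\,u_h(y)}\, e^{sFy}$, i.e. the Hamiltonian flows of $h$ and $f(y)=\frac12\langle y,Fy\rangle$ on $T^*G \cong G \times \mathfrak{g}$ commute. -/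
/-!
Writing `x = e^{sFy}`, the relation `Ad (e^X) = e^{ad_X}` gives `Ad_{x⁻¹} y = e^{-s ad_{Fy}} y`.
Since `h` is `Ad`-invariant and `Ad` is orthogonal, the gradient is equivariant,
`u (Ad_{x⁻¹} y) = Ad_{x⁻¹} (u y)`, so `e^{t u(Ad_{x⁻¹} y)} = x⁻¹ e^{t u(y)} x`.
-/

open scoped RealInnerProductSpace

theorem map_gradient_of_comp_eq {E : Type*} [NormedAddCommGroup E] [InnerProductSpace ℝ E]
    (L : E ≃ₗᵢ[ℝ] E) {h : E → ℝ} (hL : ∀ y, h (L y) = h y)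
    {u : E → E} (hu : ∀ y v, ⟪u y, v⟫ = fderiv ℝ h y v) (y : E) :
    u (L y) = L (u y) := by
  have hcomp : h ∘ L.toContinuousLinearEquiv = h := funext hL
  have hderiv :
      fderiv ℝ h y = (fderiv ℝ h (L y)).comp (L.toContinuousLinearEquiv : E →L[ℝ] E) := by
    conv_lhs => rw [← hcomp]
    exact L.toContinuousLinearEquiv.comp_right_fderiv
  refine ext_inner_right ℝ fun v => ?_
  calc ⟪u (L y), v⟫ = fderiv ℝ h (L y) (L (L.symm v)) := by rw [hu, L.apply_symm_apply]
    _ = ⟪u y, L.symm v⟫ := by rw [hu, hderiv]; rfl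
    _ = ⟪L (u y), v⟫ := by rw [← L.inner_map_map, L.apply_symm_apply]

theorem LinearEquiv.symm_apply_eq_exp_neg {E : Type*} [NormedAddCommGroup E] [NormedSpace ℝ E]
    [CompleteSpace E] (e : E ≃ₗ[ℝ] E) {A : E →L[ℝ] E} (he : ∀ v, e v = NormedSpace.exp A v)
    (v : E) : e.symm v = NormedSpace.exp (-A) v := by
  -- `exp_add_of_commute` is stated over `ℚ`-algebras
  let +nondep : NormedAlgebra ℚ (E →L[ℝ] E) := .restrictScalars ℚ ℝ _
  have hinv : NormedSpace.exp A * NormedSpace.exp (-A) = 1 := by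
    rw [← NormedSpace.exp_add_of_commute (Commute.refl A).neg_right, add_neg_cancel,
      NormedSpace.exp_zero]
  rw [e.symm_apply_eq, he, ← mul_apply_eq_comp, hinv, one_apply_eq_self]

theorem mul_exp_gradient_conj {g G : Type*} [AddCommGroup g] [Module ℝ g] [Group G]
    {expG : g → G} {Ad : G →* (g ≃ₗ[ℝ] g)}
    (hconj : ∀ (x : G) (X : g), expG (Ad x X) = x * expG X * x⁻¹)
    {u : g → g} (hequiv : ∀ (x : G) (y : g), u (Ad x y) = Ad x (u y))
    (x : G) (y : g) (t : ℝ) :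
    x * expG (t • u (Ad x⁻¹ y)) = expG (t • u y) * x := by
  rw [hequiv, ← map_smul, hconj]
  group

theorem flows_commute_general
    {g : Type*} [NormedAddCommGroup g] [InnerProductSpace ℝ g] [FiniteDimensional ℝ g]
    (l : g →ₗ[ℝ] g →ₗ[ℝ] g)
    (F : g →ₗ[ℝ] g)
    (G : Type*) [Group G]
    (expG : g → G)
    (Ad : G →* (g ≃ₗ[ℝ] g))
    (hAdinv : ∀ (x : G) (A B : g), ⟪Ad x A, Ad x B⟫ = ⟪A, B⟫)
    (h : g → ℝ)
    (hAdh : ∀ (x : G) (y : g), h (Ad x y) = h y)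
    (u : g → g)
    (hu : ∀ (y A : g), ⟪u y, A⟫ = fderiv ℝ h y A)
    (hAdexp : ∀ (X V : g),
      Ad (expG X) V = NormedSpace.exp (LinearMap.toContinuousLinearMap (l X)) V)
    (hconj : ∀ (x : G) (X : g), expG (Ad x X) = x * expG X * x⁻¹)
    (y : g) (s t' : ℝ) :
    expG (s • F y)
        * expG (t' • u (NormedSpace.exp
            ((-s) • LinearMap.toContinuousLinearMap (l (F y))) y))
      = expG (t' • u y) * expG (s • F y) := by
  have hequiv (x : G) (v : g) : u (Ad x v) = Ad x (u v) :=
    map_gradient_of_comp_eq ((Ad x).isometryOfInner (hAdinv x)) (hAdh x) hu v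
  have hAd_inv : Ad (expG (s • F y))⁻¹ y
      = NormedSpace.exp ((-s) • LinearMap.toContinuousLinearMap (l (F y))) y := by
    rw [map_inv, neg_smul]
    refine (Ad _).symm_apply_eq_exp_neg (fun v => ?_) y
    rw [hAdexp, map_smul, map_smul]
  rw [← hAd_inv]
  exact mul_exp_gradient_conj hconj hequiv _ y t'

/-- commutation of the Hamiltonian flows of the bi-invariant Hamiltonian `h`
and the `G × T`-invariant quadratic Hamiltonian `f(y) = ½⟪y, Fy⟫` on `T*G ≅ G × 𝔤`:
`e^{sFy} · e^{t u(e^{-s ad_{Fy}} y)} = e^{t u(y)} · e^{sFy}` in the group `G`.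
The group `G`, its exponential `expG`, the adjoint representation `Ad` and the relations
`Ad (expG X) = e^{ad_X}` and `expG (Ad_x X) = x (expG X) x⁻¹` are given as data. -/
theorem flows_commute
    {g : Type*} [NormedAddCommGroup g] [InnerProductSpace ℝ g] [FiniteDimensional ℝ g]
    (l : g →ₗ[ℝ] g →ₗ[ℝ] g)
    (hlalt : ∀ X : g, l X X = 0)
    (hljac : ∀ X Y Z : g, l X (l Y Z) = l (l X Y) Z + l Y (l X Z))
    (t : Submodule ℝ g)
    (htsub : ∀ A ∈ t, ∀ B ∈ t, l A B ∈ t)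
    (habelian : ∀ A ∈ t, ∀ B ∈ t, l A B = 0)
    (F : g →ₗ[ℝ] g)
    (hFsa : ∀ v w : g, ⟪F v, w⟫ = ⟪v, F w⟫)
    (hFim : ∀ v : g, F v ∈ t)
    (hFperp : ∀ v ∈ tᗮ, F v = 0)
    (G : Type*) [Group G]
    (expG : g → G)
    (Ad : G →* (g ≃ₗ[ℝ] g))
    (hAdinv : ∀ (x : G) (A B : g), ⟪Ad x A, Ad x B⟫ = ⟪A, B⟫)
    (h : g → ℝ) (hh : Differentiable ℝ h)
    (hAdh : ∀ (x : G) (y : g), h (Ad x y) = h y)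
    (u : g → g)
    (hu : ∀ (y A : g), ⟪u y, A⟫ = fderiv ℝ h y A)
    (hAdexp : ∀ (X V : g),
      Ad (expG X) V = NormedSpace.exp (LinearMap.toContinuousLinearMap (l X)) V)
    (hconj : ∀ (x : G) (X : g), expG (Ad x X) = x * expG X * x⁻¹)
    (y : g) (s t' : ℝ) :
    expG (s • F y)
        * expG (t' • u (NormedSpace.exp
            ((-s) • LinearMap.toContinuousLinearMap (l (F y))) y))
      = expG (t' • u y) * expG (s • F y) :=
  flows_commute_general l F G expG Ad hAdinv h hAdh u hu hAdexp hconj y s t'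
end
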